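/- For every λ-term F there is a sequence (F_k)_{k∈ℕ} of terms such that: F_0 = F; F_k ▷* F_{k+1} for every k; for every G with F ▷* G there is some k with G ▷* F_k; and, with respect to a fixed effective Gödel numbering # of λ-terms, the function k ↦ #(F_k) is computable. -/

import Mathlib

/-! ## A de Bruijn presentation of the untyped λ-calculus -/

/-- Untyped λ-terms in de Bruijn representation. -/
inductive Lam : Type where
  | var : ℕ → Lam
  | app : Lam → Lam → Lam
  | abs : Lam → Lam
  deriving DecidableEq

namespace Lam

/-- Lifting of de Bruijn indices (cutoff `d`). -/
def lift (d : ℕ) : Lam → Lam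
  | var n => if n < d then var n else var (n + 1)
  | app a b => app (lift d a) (lift d b)
  | abs a => abs (lift (d + 1) a)

/-- Capture-avoiding substitution of `u` for the free variable `k`. -/
def subst : Lam → ℕ → Lam → Lam
  | var n, k, u => if n = k then u else if k < n then var (n - 1) else var n
  | app a b, k, u => app (subst a k u) (subst b k u)
  | abs a, k, u => abs (subst a (k + 1) (lift 0 u))

/-- One-step β-reduction `▷`. -/
inductive Step : Lam → Lam → Prop
  | beta (a b : Lam) : Step (app (abs a) b) (subst a 0 b)
  | appL {a a' : Lam} (b : Lam) : Step a a' → Step (app a b) (app a' b)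
  | appR (a : Lam) {b b' : Lam} : Step b b' → Step (app a b) (app a b')
  | abs {a a' : Lam} : Step a a' → Step (Lam.abs a) (Lam.abs a')

/-- β-reduction `▷*` : reflexive and transitive closure of `▷`. -/
def Steps : Lam → Lam → Prop := Relation.ReflTransGen Step

/-- β-normal term. -/
def Normal (t : Lam) : Prop := ∀ t', ¬ Step t t'

/-- `Free x t` : the variable `x` (de Bruijn index, seen from the root) occurs free in `t`. -/
def Free : ℕ → Lam → Prop
  | x, var n => x = n
  | x, app a b => Free x a ∨ Free x b
  | x, abs a => Free (x + 1) a

/-- Closed term. -/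
def Closed (t : Lam) : Prop := ∀ x, ¬ Free x t

/-- A variable applied to a (possibly empty) list of arguments. -/
inductive HeadVarApp : Lam → Prop
  | var (n : ℕ) : HeadVarApp (var n)
  | app {a : Lam} (b : Lam) : HeadVarApp a → HeadVarApp (app a b)

/-- Head normal forms `λx₁…λxₙ.(y t₁ … tₘ)`. -/
inductive IsHNF : Lam → Prop
  | head {t : Lam} : HeadVarApp t → IsHNF t
  | abs {a : Lam} : IsHNF a → IsHNF (Lam.abs a)

/-- A term is solvable if it β-reduces to a head normal form. -/
def Solvable (t : Lam) : Prop := ∃ h, Steps t h ∧ IsHNF h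

/-- `Ω = (λx.(x x))(λx.(x x))`. -/
def Omega : Lam := app (abs (app (var 0) (var 0))) (abs (app (var 0) (var 0)))

/-- Ω-reduction `▷_Ω` : replace an unsolvable subterm by `Ω`. -/
inductive OmegaStep : Lam → Lam → Prop
  | unsolv {t : Lam} : ¬ Solvable t → OmegaStep t Omega
  | appL {a a' : Lam} (b : Lam) : OmegaStep a a' → OmegaStep (app a b) (app a' b)
  | appR (a : Lam) {b b' : Lam} : OmegaStep b b' → OmegaStep (app a b) (app a b')
  | abs {a a' : Lam} : OmegaStep a a' → OmegaStep (Lam.abs a) (Lam.abs a')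

/-- `▷_Ω*`. -/
def OmegaSteps : Lam → Lam → Prop := Relation.ReflTransGen OmegaStep

/-- `▷_{βΩ}` : union of `▷` and `▷_Ω`. -/
def BOStep (t t' : Lam) : Prop := Step t t' ∨ OmegaStep t t'

/-- `▷_{βΩ}*`. -/
def BOSteps : Lam → Lam → Prop := Relation.ReflTransGen BOStep

/-- `u ≃ v` : equality in the λ-theory H (common `▷_{βΩ}*`-reduct). -/
def SimH (u v : Lam) : Prop := ∃ w, BOSteps u w ∧ BOSteps v w

/-- Simultaneous (parallel) substitution along `σ`. -/
def psubst (σ : ℕ → Lam) : Lam → Lam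
  | var n => σ n
  | app a b => app (psubst σ a) (psubst σ b)
  | abs a => abs (psubst (fun n => match n with | 0 => var 0 | m + 1 => lift 0 (σ m)) a)

/-- `(x V)` : the application of a head `h` to a list of arguments. -/
def mkApps (h : Lam) (as : List Lam) : Lam := as.foldl app h

/-- `U ⊑ V` : some initial segment of `V` is obtained from `U` by a substitution
followed by componentwise β-reductions. -/
def Sqsubseteq (U V : List Lam) : Prop :=
  ∃ (σ : ℕ → Lam) (W : List Lam), W <+: V ∧
    List.Forall₂ (fun u w => Steps (psubst σ u) w) U W

/-! ### Occurrences as positions -/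

/-- Directions inside a term. -/
inductive Dir : Type where
  | left | right | down
  deriving DecidableEq

/-- Positions (occurrences) in a term. -/
abbrev Pos := List Dir

/-- The subterm of `t` at position `p` (if any). -/
def subtermAt : Lam → Pos → Option Lam
  | t, [] => some t
  | app a _, Dir.left :: p => subtermAt a p
  | app _ b, Dir.right :: p => subtermAt b p
  | abs a, Dir.down :: p => subtermAt a p
  | _, _ :: _ => none

/-- Replace the subterm of `t` at position `p` by `s` (if the position exists). -/
def replaceAt : Lam → Pos → Lam → Option Lam
  | _, [], s => some s
  | app a b, Dir.left :: p, s => (replaceAt a p s).map (fun a' => app a' b)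
  | app a b, Dir.right :: p, s => (replaceAt b p s).map (fun b' => app a b')
  | abs a, Dir.down :: p, s => (replaceAt a p s).map Lam.abs
  | _, _ :: _, _ => none

/-- `OccOf x t p` : position `p` is an occurrence in `t` of the free variable `x`
(index seen from the root, hence shifted by the number of binders crossed). -/
def OccOf (x : ℕ) (t : Lam) (p : Pos) : Prop :=
  subtermAt t p = some (var (x + p.count Dir.down))

/-- `ArgOf t p V` : `V` is the maximal list of arguments, in `t`, of the occurrence
sitting at position `p`; i.e. `([] V)` is the applicative context of that occurrence. -/
def ArgOf (t : Lam) (p : Pos) (V : List Lam) : Prop :=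
  ∃ (q : Pos) (h : Lam),
    p = q ++ List.replicate V.length Dir.left ∧
    (∀ q' : Pos, q ≠ q' ++ [Dir.left]) ∧
    subtermAt t q = some (mkApps h V) ∧ subtermAt t p = some h

/-- `InArgOfOcc x t p q` : `q` is an occurrence of `x` in `t` and the position `p` lies
inside one of the elements of `Arg(x_[q], t)`. -/
def InArgOfOcc (x : ℕ) (t : Lam) (p q : Pos) : Prop :=
  OccOf x t q ∧ ∃ (r : Pos) (n : ℕ),
    q = r ++ List.replicate n Dir.left ∧
    (∀ r' : Pos, r ≠ r' ++ [Dir.left]) ∧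
    ∃ (j : ℕ) (s : Pos), j < n ∧ p = r ++ List.replicate j Dir.left ++ Dir.right :: s

/-- The occurrence `p` of `x` is pure in `t` : no other occurrence `q` of `x` in `t`
is such that `p` occurs in one of the elements of `Arg(x_[q], t)`. -/
def PureOcc (x : ℕ) (t : Lam) (p : Pos) : Prop :=
  OccOf x t p ∧ ∀ q, q ≠ p → ¬ InArgOfOcc x t p q

/-- Renaming of the free variable `y` into `x`. -/
def rename (y x : ℕ) : Lam → Lam
  | var n => if n = y then var x else var n
  | app a b => app (rename y x a) (rename y x b)
  | abs a => abs (rename (y + 1) (x + 1) a)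

/-- `Residue x u v p p'` : along some β-reduction from `u` to `v`, the occurrence `p'` of
`x` in `v` is a residue (traced copy) of the occurrence `p` of `x` in `u`.  This is
expressed by marking the occurrence `p` of `x` with a fresh variable `y` and tracing the
occurrences of `y`. -/
def Residue (x : ℕ) (u v : Lam) (p p' : Pos) : Prop :=
  ∃ (y : ℕ) (u₀ v₀ : Lam),
    ¬ Free y u ∧
    replaceAt u p (var (y + p.count Dir.down)) = some u₀ ∧
    Steps u₀ v₀ ∧ rename y x v₀ = v ∧ OccOf y v₀ p'

/-- The occurrence `p` of the free variable `0` ("x") in `G` is good with respect to the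
closed term `A` : it is pure in `G` and `u[x:=A]` is solvable for every subterm `u` of
`G` in which this occurrence occurs. -/
def GoodOcc (A G : Lam) (p : Pos) : Prop :=
  PureOcc 0 G p ∧
    ∀ (q : Pos) (u : Lam), q <+: p → subtermAt G q = some u →
      Solvable (subst u (q.count Dir.down) A)

/-! ### Miscellaneous -/

/-- A fixed effective Gödel numbering of λ-terms. -/
def code : Lam → ℕ
  | var n => Nat.pair 0 n
  | app a b => Nat.pair 1 (Nat.pair (code a) (code b))
  | abs a => Nat.pair 2 (code a)

/-- Body `f^k z` of the Church numeral. -/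
def churchBody : ℕ → Lam
  | 0 => var 0
  | k + 1 => app (var 1) (churchBody k)

/-- The Church numeral `c_k = λf λz.(f^k z)`. -/
def church (k : ℕ) : Lam := abs (abs (churchBody k))

/-- `n`-fold abstraction `λx₁…λxₙ.t`. -/
def absN : ℕ → Lam → Lam
  | 0, t => t
  | n + 1, t => abs (absN n t)

/-- Number of symbols of a term. -/
def size : Lam → ℕ
  | var _ => 1
  | app a b => size a + size b + 1
  | abs a => size a + 1

/-- Subterm relation. -/
inductive Subterm : Lam → Lam → Prop
  | refl (t : Lam) : Subterm t t
  | appL {s a : Lam} (b : Lam) : Subterm s a → Subterm s (app a b)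
  | appR (a : Lam) {s b : Lam} : Subterm s b → Subterm s (app a b)
  | abs {s a : Lam} : Subterm s a → Subterm s (Lam.abs a)

/-- `t` contains no subterm of the form `(x u)` for the free variable `x`. -/
def NoVarApp : ℕ → Lam → Prop
  | _, var _ => True
  | x, app a b => a ≠ var x ∧ NoVarApp x a ∧ NoVarApp x b
  | x, abs a => NoVarApp (x + 1) a

/-- Headed by the variable `d` : term of the form `(x V)` with `x = var d`. -/
inductive Headed : ℕ → Lam → Prop
  | var (d : ℕ) : Headed d (var d)
  | app {d : ℕ} {a : Lam} (b : Lam) : Headed d a → Headed d (app a b)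

end Lam

/-!
The sequence is `F, cd F, cd (cd F), …`, where `cd` is the complete development. A parallel
step `t ⇒ u` always satisfies the triangle property `u ⇒ cd t`, and `cd` is monotone for `⇒`;
hence along any reduction `F ▷* G` of length `k` one gets `G ▷* cd^[k] F`.

For computability, `Lam` is made `Primcodable` with `code` as its encoding. The codes of the
immediate subterms of a term are smaller than its own code, so structural recursions on terms
(`lift`, `subst`, `cd`) are primitive recursive by course-of-values recursion on codes.
-/

namespace Lam

theorem lift_lift (t : Lam) {i j : ℕ} (h : i ≤ j) :
    lift i (lift j t) = lift (j + 1) (lift i t) := by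
  induction t generalizing i j with
  | var n =>
    simp only [lift]
    split_ifs <;> simp only [lift] <;> split_ifs <;> first | rfl | omega
  | app a b iha ihb => simp only [lift, iha h, ihb h]
  | abs a ih => simp only [lift, ih (Nat.succ_le_succ h)]

theorem lift_subst_of_le (t s : Lam) {i j : ℕ} (h : j ≤ i) :
    lift i (subst t j s) = subst (lift (i + 1) t) j (lift i s) := by
  induction t generalizing s i j with
  | var n =>
    simp only [subst, lift]
    split_ifs <;> simp only [subst, lift] <;> split_ifs <;>
      first | rfl | omega | (simp only [var.injEq]; omega)
  | app a b iha ihb => simp only [subst, lift, iha s h, ihb s h]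
  | abs a ih =>
    simp only [subst, lift]
    rw [ih (lift 0 s) (Nat.succ_le_succ h), ← lift_lift s (Nat.zero_le i)]

theorem lift_subst_of_ge (t s : Lam) {i j : ℕ} (h : i ≤ j) :
    lift i (subst t j s) = subst (lift i t) (j + 1) (lift i s) := by
  induction t generalizing s i j with
  | var n =>
    simp only [subst, lift]
    split_ifs <;> simp only [subst, lift] <;> split_ifs <;>
      first | rfl | omega | (simp only [var.injEq]; omega)
  | app a b iha ihb => simp only [subst, lift, iha s h, ihb s h]
  | abs a ih =>
    simp only [subst, lift]
    rw [ih (lift 0 s) (Nat.succ_le_succ h), ← lift_lift s (Nat.zero_le i)]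

theorem subst_lift (t : Lam) (k : ℕ) (s : Lam) : subst (lift k t) k s = t := by
  induction t generalizing k s with
  | var n =>
    simp only [lift]
    split_ifs <;> simp only [subst] <;> split_ifs <;> first | rfl | omega
  | app a b iha ihb => simp only [subst, lift, iha, ihb]
  | abs a ih => simp only [subst, lift, ih]

theorem subst_subst (t u v : Lam) {i j : ℕ} (h : i ≤ j) :
    subst (subst t i u) j v = subst (subst t (j + 1) (lift i v)) i (subst u j v) := by
  induction t generalizing u v i j with
  | var n =>
    simp only [subst]
    split_ifs <;> (try simp only [subst]) <;> (try split_ifs) <;>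
      first | rfl | omega | exact (subst_lift v i (subst u j v)).symm
  | app a b iha ihb => simp only [subst, iha u v h, ihb u v h]
  | abs a ih =>
    simp only [subst]
    rw [ih (lift 0 u) (lift 0 v) (Nat.succ_le_succ h), ← lift_lift v (Nat.zero_le i),
      ← lift_subst_of_ge u v (Nat.zero_le j)]

theorem Steps.app {a a' b b' : Lam} (ha : Steps a a') (hb : Steps b b') :
    Steps (.app a b) (.app a' b') :=
  (Relation.ReflTransGen.lift (Lam.app · b) (fun _ _ => Step.appL b) _ _ ha).trans
    (Relation.ReflTransGen.lift (Lam.app a') (fun _ _ => Step.appR a') _ _ hb)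

theorem Steps.abs {a a' : Lam} (h : Steps a a') : Steps (.abs a) (.abs a') :=
  Relation.ReflTransGen.lift Lam.abs (fun _ _ => Step.abs) _ _ h

/-- Parallel reduction `⇒`. -/
inductive Par : Lam → Lam → Prop
  | var (n : ℕ) : Par (var n) (var n)
  | app {a a' b b' : Lam} : Par a a' → Par b b' → Par (app a b) (app a' b')
  | abs {a a' : Lam} : Par a a' → Par (abs a) (abs a')
  | beta {a a' b b' : Lam} : Par a a' → Par b b' → Par (app (abs a) b) (subst a' 0 b')

namespace Par

theorem refl : ∀ t : Lam, Par t t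
  | .var n => .var n
  | .app a b => .app (refl a) (refl b)
  | .abs a => .abs (refl a)

theorem of_step {t u : Lam} (h : Step t u) : Par t u := by
  induction h with
  | beta a b => exact .beta (refl a) (refl b)
  | appL b _ ih => exact .app ih (refl b)
  | appR a _ ih => exact .app (refl a) ih
  | abs _ ih => exact .abs ih

theorem steps {t u : Lam} (h : Par t u) : Steps t u := by
  induction h with
  | var n => exact .refl
  | app _ _ iha ihb => exact iha.app ihb
  | abs _ ih => exact ih.abs
  | beta _ _ iha ihb => exact (iha.abs.app ihb).tail (.beta _ _)

theorem lift {t u : Lam} (h : Par t u) (d : ℕ) : Par (lift d t) (lift d u) := by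
  induction h generalizing d with
  | var n => exact refl _
  | app _ _ iha ihb => exact .app (iha d) (ihb d)
  | abs _ ih => exact .abs (ih (d + 1))
  | @beta a a' b b' _ _ iha ihb =>
    rw [lift_subst_of_le a' b' (Nat.zero_le d)]
    exact .beta (iha (d + 1)) (ihb d)

theorem subst {t t' u u' : Lam} (ht : Par t t') (hu : Par u u') (k : ℕ) :
    Par (subst t k u) (subst t' k u') := by
  induction ht generalizing u u' k with
  | var n =>
    simp only [Lam.subst]
    split_ifs
    exacts [hu, refl _, refl _]
  | app _ _ iha ihb => exact .app (iha hu k) (ihb hu k)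
  | abs _ ih => exact .abs (ih (hu.lift 0) (k + 1))
  | @beta a a' b b' _ _ iha ihb =>
    rw [subst_subst a' b' u' (Nat.zero_le k)]
    exact .beta (iha (hu.lift 0) (k + 1)) (ihb hu k)

theorem abs_inv {a u : Lam} (h : Par (.abs a) u) : ∃ a', u = .abs a' ∧ Par a a' := by
  cases h with
  | abs h => exact ⟨_, rfl, h⟩

end Par

/-- The development of `app a b`, given the developments `a'` of `a` and `b'` of `b`. Only redexes
already present are contracted, so `a` itself, not merely `a'`, must be an abstraction. -/
def cdApp (a a' b' : Lam) : Lam :=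
  match a, a' with
  | abs _, abs c => subst c 0 b'
  | _, _ => app a' b'

/-- The complete development (Gross–Knuth step). -/
def cd : Lam → Lam
  | var n => var n
  | app a b => cdApp a (cd a) (cd b)
  | abs a => abs (cd a)

theorem Par.triangle {t u : Lam} (h : Par t u) : Par u (cd t) := by
  induction t generalizing u with
  | var n => cases h; exact .var n
  | app a b iha ihb =>
    cases h with
    | app ha hb =>
      cases a with
      | abs _ =>
        obtain ⟨a', rfl, -⟩ := ha.abs_inv
        obtain ⟨_, he, hcd⟩ := (iha ha).abs_inv
        cases he
        exact .beta hcd (ihb hb)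
      | _ => exact .app (iha ha) (ihb hb)
    | beta ha hb =>
      obtain ⟨_, he, hcd⟩ := (iha (.abs ha)).abs_inv
      cases he
      exact hcd.subst (ihb hb) 0
  | abs a ih =>
    obtain ⟨a', rfl, ha⟩ := h.abs_inv
    exact .abs (ih ha)

theorem Par.cd_mono {t u : Lam} (h : Par t u) : Par (cd t) (cd u) :=
  h.triangle.triangle

theorem steps_cd (t : Lam) : Steps t (cd t) :=
  (Par.refl t).triangle.steps

theorem Steps.cd_mono {t u : Lam} (h : Steps t u) : Steps (cd t) (cd u) :=
  Relation.ReflTransGen.lift' cd (fun _ _ hs => (Par.of_step hs).cd_mono.steps) _ _ h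

theorem Steps.exists_steps_iterate_cd {F G : Lam} (h : Steps F G) :
    ∃ k, Steps G (cd^[k] F) := by
  induction h with
  | refl => exact ⟨0, .refl⟩
  | tail _ hstep ih =>
    obtain ⟨k, hk⟩ := ih
    refine ⟨k + 1, (Par.of_step hstep).triangle.steps.trans ?_⟩
    rw [Function.iterate_succ_apply']
    exact hk.cd_mono

end Lam

theorem Nat.unpair_snd_lt {n : ℕ} (h : n.unpair.1 ≠ 0) : n.unpair.2 < n := by
  have := Nat.unpair_add_le n
  omega

theorem Nat.lt_pair_of_pos {a : ℕ} (ha : 0 < a) (b : ℕ) : b < Nat.pair a b :=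
  (Nat.right_le_pair 0 b).trans_lt (Nat.pair_lt_pair_left b ha)

namespace Lam

open Primrec

theorem code_lt_code_app_left (a b : Lam) : code a < code (app a b) :=
  (Nat.left_le_pair _ _).trans_lt (Nat.lt_pair_of_pos one_pos _)

theorem code_lt_code_app_right (a b : Lam) : code b < code (app a b) :=
  (Nat.right_le_pair _ _).trans_lt (Nat.lt_pair_of_pos one_pos _)

theorem code_lt_code_abs (a : Lam) : code a < code (abs a) :=
  Nat.lt_pair_of_pos two_pos _

/-- Decoding of `code`; numbers outside its range decode to variables. -/
def ofCode (n : ℕ) : Lam :=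
  if _ : n.unpair.1 = 1 then
    app (ofCode n.unpair.2.unpair.1) (ofCode n.unpair.2.unpair.2)
  else if _ : n.unpair.1 = 2 then abs (ofCode n.unpair.2)
  else var n.unpair.2
termination_by n
decreasing_by
  all_goals
    have := Nat.unpair_snd_lt (n := n) (by omega)
  · exact (Nat.unpair_left_le _).trans_lt this
  · exact (Nat.unpair_right_le _).trans_lt this
  · exact this

theorem ofCode_code (t : Lam) : ofCode (code t) = t := by
  induction t with
  | var n => rw [ofCode]; simp [code]
  | app a b iha ihb => rw [ofCode]; simp [code, iha, ihb]
  | abs a ih => rw [ofCode]; simp [code, ih]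

theorem code_ofCode (n : ℕ) : code (ofCode n) =
    if n.unpair.1 = 1 then
      Nat.pair 1 (Nat.pair (code (ofCode n.unpair.2.unpair.1)) (code (ofCode n.unpair.2.unpair.2)))
    else if n.unpair.1 = 2 then Nat.pair 2 (code (ofCode n.unpair.2))
    else Nat.pair 0 n.unpair.2 := by
  rw [ofCode]
  split_ifs <;> rfl

theorem primrec_code_ofCode : Primrec fun n => code (ofCode n) := by
  have arg : Primrec fun n : ℕ => n.unpair.2 := snd.comp unpair
  have isTag (k : ℕ) : PrimrecPred fun n : ℕ => n.unpair.1 = k :=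
    Primrec.eq.comp (fst.comp unpair) (const k)
  refine nat_omega_rec' _ (m := id)
    (l := fun n => if n.unpair.1 = 1 then [n.unpair.2.unpair.1, n.unpair.2.unpair.2]
      else if n.unpair.1 = 2 then [n.unpair.2] else [])
    (g := fun n rs => some <|
      if n.unpair.1 = 1 then Nat.pair 1 (Nat.pair (rs.getD 0 0) (rs.getD 1 0))
      else if n.unpair.1 = 2 then Nat.pair 2 (rs.getD 0 0) else Nat.pair 0 n.unpair.2)
    Primrec.id ?_ ?_ ?_ ?_
  · exact Primrec.ite (isTag 1)
      (list_cons.comp (fst.comp (unpair.comp arg))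
        (list_cons.comp (snd.comp (unpair.comp arg)) (const [])))
      (Primrec.ite (isTag 2) (list_cons.comp arg (const [])) (const []))
  · have result (i : ℕ) : Primrec fun p : ℕ × List ℕ => p.2.getD i 0 :=
      (list_getD 0).comp snd (const i)
    exact option_some.comp <| Primrec.ite ((isTag 1).comp fst)
      (Primrec₂.natPair.comp (const 1) (Primrec₂.natPair.comp (result 0) (result 1)))
      (Primrec.ite ((isTag 2).comp fst) (Primrec₂.natPair.comp (const 2) (result 0))
        (Primrec₂.natPair.comp (const 0) (arg.comp fst)))
  · intro n n' hn'
    have := Nat.unpair_snd_lt (n := n)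
    split_ifs at hn' <;> simp only [List.mem_cons, List.not_mem_nil, or_false] at hn'
    · rcases hn' with rfl | rfl
      · exact (Nat.unpair_left_le _).trans_lt (this (by omega))
      · exact (Nat.unpair_right_le _).trans_lt (this (by omega))
    · subst hn'
      exact this (by omega)
  · intro n
    rw [code_ofCode n]
    split_ifs <;> rfl

instance : Primcodable Lam where
  encode := code
  decode n := some (ofCode n)
  encodek t := congrArg some (ofCode_code t)
  prim := Nat.Primrec.succ.comp (Primrec.nat_iff.1 primrec_code_ofCode)

theorem primrec_code : Primrec code := Primrec.encode

theorem primrec_ofCode : Primrec ofCode := encode_iff.1 primrec_code_ofCode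

theorem primrec_var : Primrec var :=
  encode_iff.1 (Primrec₂.natPair.comp (const 0) Primrec.id)

theorem primrec₂_app : Primrec₂ app :=
  Primrec₂.encode_iff.1 <| Primrec₂.natPair.comp (const 1)
    (Primrec₂.natPair.comp (primrec_code.comp fst) (primrec_code.comp snd))

theorem primrec_abs : Primrec abs :=
  encode_iff.1 (Primrec₂.natPair.comp (const 2) primrec_code)

section

variable {α σ : Type*}

/-- The recursive calls of a structural recursion on terms whose parameter changes by `φ`
under a binder. -/
def recCalls (φ : α → α) (p : α × Lam) : List (α × Lam) :=
  Lam.casesOn p.2 (fun _ => []) (fun a b => [(p.1, a), (p.1, b)]) (fun a => [(φ p.1, a)])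

/-- One step of such a recursion, given the results `rs` of the calls `recCalls φ p`. -/
def recStep (fv : α → ℕ → σ) (fa : α → (Lam × Lam) × (σ × σ) → σ) (fb : α → Lam × σ → σ)
    (p : α × Lam) (rs : List σ) : Option σ :=
  Lam.casesOn p.2 (fun n => some (fv p.1 n))
    (fun a b => rs[0]?.bind fun ra => rs[1]?.map fun rb => fa p.1 ((a, b), (ra, rb)))
    (fun a => rs[0]?.map fun r => fb p.1 (a, r))

theorem code_lt_of_mem_recCalls {φ : α → α} {p q : α × Lam} (hq : q ∈ recCalls φ p) :
    code q.2 < code p.2 := by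
  obtain ⟨x, t⟩ := p
  cases t with
  | var n => cases hq
  | app a b =>
    simp only [recCalls, List.mem_cons, List.not_mem_nil, or_false] at hq
    rcases hq with rfl | rfl
    · exact code_lt_code_app_left a b
    · exact code_lt_code_app_right a b
  | abs a =>
    simp only [recCalls, List.mem_cons, List.not_mem_nil, or_false] at hq
    subst hq
    exact code_lt_code_abs a

variable [Primcodable α] [Primcodable σ]

theorem primrec_casesOn {t : α → Lam} {fv : α → ℕ → σ} {fa : α → Lam × Lam → σ}
    {fb : α → Lam → σ} (ht : Primrec t) (hv : Primrec₂ fv) (ha : Primrec₂ fa)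
    (hb : Primrec₂ fb) :
    Primrec fun x => Lam.casesOn (motive := fun _ => σ) (t x) (fv x) (fun a b => fa x (a, b))
      (fb x) := by
  have arg : Primrec fun p : α × ℕ => p.2.unpair.2 := snd.comp (unpair.comp snd)
  have isTag (k : ℕ) : PrimrecPred fun p : α × ℕ => p.2.unpair.1 = k :=
    Primrec.eq.comp (fst.comp (unpair.comp snd)) (const k)
  have onCodes : Primrec₂ fun x n =>
      Lam.casesOn (motive := fun _ => σ) (ofCode n) (fv x) (fun a b => fa x (a, b)) (fb x) := by
    refine (Primrec.ite (isTag 1)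
      (ha.comp fst (pair (primrec_ofCode.comp (fst.comp (unpair.comp arg)))
        (primrec_ofCode.comp (snd.comp (unpair.comp arg)))))
      (Primrec.ite (isTag 2) (hb.comp fst (primrec_ofCode.comp arg))
        (hv.comp fst arg))).of_eq fun ⟨x, n⟩ => ?_
    dsimp only
    rw [ofCode.eq_def n]
    split_ifs <;> rfl
  exact (onCodes.comp Primrec.id (primrec_code.comp ht)).of_eq fun x => by
    rw [ofCode_code]
    rfl

theorem primrec_recCalls {φ : α → α} (hφ : Primrec φ) : Primrec (recCalls φ) :=
  primrec_casesOn snd (const []).to₂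
    (list_cons.comp (pair (fst.comp fst) (fst.comp snd))
      (list_cons.comp (pair (fst.comp fst) (snd.comp snd)) (const []))).to₂
    (list_cons.comp (pair (hφ.comp (fst.comp fst)) snd) (const [])).to₂

theorem primrec₂_recStep {fv : α → ℕ → σ} {fa : α → (Lam × Lam) × (σ × σ) → σ}
    {fb : α → Lam × σ → σ} (hv : Primrec₂ fv) (ha : Primrec₂ fa) (hb : Primrec₂ fb) :
    Primrec₂ (recStep fv fa fb) := by
  have result (i : ℕ) : Primrec fun q : (α × Lam) × List σ => q.2[i]? :=
    list_getElem?.comp snd (const i)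
  have onVar : Primrec₂ fun (q : (α × Lam) × List σ) n => some (fv q.1.1 n) :=
    option_some.comp (hv.comp (fst.comp (fst.comp fst)) snd)
  have onApp : Primrec₂ fun (q : (α × Lam) × List σ) (ab : Lam × Lam) =>
      q.2[0]?.bind fun ra => q.2[1]?.map fun rb => fa q.1.1 (ab, (ra, rb)) := by
    have combine : Primrec₂ fun (qr : ((α × Lam) × List σ) × (Lam × Lam) × σ) (rb : σ) =>
        fa qr.1.1.1 (qr.2.1, (qr.2.2, rb)) :=
      ha.comp (fst.comp (fst.comp (fst.comp fst)))
        (pair (fst.comp (snd.comp fst)) (pair (snd.comp (snd.comp fst)) snd))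
    exact option_bind ((result 0).comp fst) <| Primrec₂.of_eq (option_map
      ((result 1).comp (fst.comp fst)) (combine.comp (pair (fst.comp (fst.comp fst))
        (pair (snd.comp (fst.comp fst)) (snd.comp fst))) snd).to₂).to₂ fun _ _ => rfl
  have onAbs : Primrec₂ fun (q : (α × Lam) × List σ) (a : Lam) =>
      q.2[0]?.map fun r => fb q.1.1 (a, r) :=
    option_map ((result 0).comp fst)
      (hb.comp (fst.comp (fst.comp (fst.comp fst))) (pair (snd.comp fst) snd)).to₂
  exact primrec_casesOn (snd.comp fst) onVar onApp onAbs

theorem primrec₂_of_rec (f : α → Lam → σ) {fv : α → ℕ → σ}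
    {fa : α → (Lam × Lam) × (σ × σ) → σ} {fb : α → Lam × σ → σ} {φ : α → α}
    (hv : Primrec₂ fv) (ha : Primrec₂ fa) (hb : Primrec₂ fb) (hφ : Primrec φ)
    (hvar : ∀ x n, f x (var n) = fv x n)
    (happ : ∀ x a b, f x (app a b) = fa x ((a, b), (f x a, f x b)))
    (habs : ∀ x a, f x (abs a) = fb x (a, f (φ x) a)) :
    Primrec₂ f :=
  nat_omega_rec' (fun p : α × Lam => f p.1 p.2) (primrec_code.comp snd) (primrec_recCalls hφ)
    (primrec₂_recStep hv ha hb) (fun _ _ => code_lt_of_mem_recCalls) fun ⟨x, t⟩ => by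
      cases t <;> simp [recCalls, recStep, hvar, happ, habs]

end

theorem primrec₂_lift : Primrec₂ lift :=
  primrec₂_of_rec lift (fa := fun _ p => app p.2.1 p.2.2) (fb := fun _ p => abs p.2)
    (Primrec.ite (nat_lt.comp snd fst) (primrec_var.comp snd)
      (primrec_var.comp (succ.comp snd))).to₂
    (primrec₂_app.comp (fst.comp (snd.comp snd)) (snd.comp (snd.comp snd))).to₂
    (primrec_abs.comp (snd.comp snd)).to₂ succ
    (fun _ _ => rfl) (fun _ _ _ => rfl) (fun _ _ => rfl)

theorem primrec₂_subst : Primrec₂ fun (ku : ℕ × Lam) t => subst t ku.1 ku.2 := by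
  have k : Primrec fun p : (ℕ × Lam) × ℕ => p.1.1 := fst.comp fst
  have onVar : Primrec₂ fun (ku : ℕ × Lam) n =>
      if n = ku.1 then ku.2 else if ku.1 < n then var (n - 1) else var n :=
    Primrec.ite (Primrec.eq.comp snd k) (snd.comp fst)
      (Primrec.ite (nat_lt.comp k snd) (primrec_var.comp (pred.comp snd))
        (primrec_var.comp snd))
  exact primrec₂_of_rec _ (fa := fun _ p => app p.2.1 p.2.2) (fb := fun _ p => abs p.2)
    (φ := fun ku => (ku.1 + 1, lift 0 ku.2)) onVar
    (primrec₂_app.comp (fst.comp (snd.comp snd)) (snd.comp (snd.comp snd))).to₂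
    (primrec_abs.comp (snd.comp snd)).to₂
    (pair (succ.comp fst) (primrec₂_lift.comp (const 0) snd))
    (fun _ _ => rfl) (fun _ _ _ => rfl) (fun _ _ => rfl)

theorem primrec_cdApp : Primrec fun p : Lam × Lam × Lam => cdApp p.1 p.2.1 p.2.2 := by
  have noRedex : Primrec fun p : Lam × Lam × Lam => app p.2.1 p.2.2 :=
    primrec₂_app.comp (fst.comp snd) (snd.comp snd)
  have contract : Primrec fun p : Lam × Lam × Lam =>
      Lam.casesOn (motive := fun _ => Lam) p.2.1 (fun _ => app p.2.1 p.2.2)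
        (fun _ _ => app p.2.1 p.2.2) (fun c => subst c 0 p.2.2) :=
    primrec_casesOn (fst.comp snd) (noRedex.comp fst).to₂ (noRedex.comp fst).to₂
      (primrec₂_subst.comp (pair (const 0) (snd.comp (snd.comp fst))) snd).to₂
  refine (primrec_casesOn fst (noRedex.comp fst).to₂ (noRedex.comp fst).to₂
    (contract.comp fst).to₂).of_eq fun ⟨a, a', b'⟩ => ?_
  cases a <;> cases a' <;> rfl

theorem primrec_cd : Primrec cd :=
  (primrec₂_of_rec (fun (_ : Unit) => cd) (fa := fun _ p => cdApp p.1.1 p.2.1 p.2.2)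
    (fb := fun _ p => abs p.2) (φ := id) (primrec_var.comp snd).to₂
    (primrec_cdApp.comp (pair (fst.comp (fst.comp snd)) (snd.comp snd))).to₂
    (primrec_abs.comp (snd.comp snd)).to₂ Primrec.id
    (fun _ _ => rfl) (fun _ _ _ => rfl) (fun _ _ => rfl)).comp (const ()) Primrec.id

theorem computable_code_iterate_cd (F : Lam) : Computable fun k => code (cd^[k] F) :=
  (primrec_code.comp (nat_iterate Primrec.id (const F) (primrec_cd.comp snd).to₂)).to_comp

end Lam

open Lam in
/-- every term `F` has a cofinal recursive reduction sequence:
`F₀ = F`, `F_k ▷* F_{k+1}`, every reduct of `F` further reduces to some `F_k`, and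
`k ↦ #(F_k)` is computable (w.r.t. the fixed effective Gödel numbering `code`). -/
theorem cofinal_recursive_sequence (F : Lam) :
    ∃ Fs : ℕ → Lam,
      Fs 0 = F ∧
      (∀ k, Steps (Fs k) (Fs (k + 1))) ∧
      (∀ G, Steps F G → ∃ k, Steps G (Fs k)) ∧
      Computable (fun k => code (Fs k)) := by
  refine ⟨fun k => cd^[k] F, rfl, fun k => ?_, fun G h => h.exists_steps_iterate_cd,
    computable_code_iterate_cd F⟩
  simpa only [Function.iterate_succ_apply'] using steps_cd (cd^[k] F)
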